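/- (Unconstrained thermal channel is the completely depolarizing channel.) The completely depolarizing channel D_{A→B}(X) = tr(X)·1_B/d_B is the unique maximizer of the channel entropy S(N) over all quantum channels N_{A→B}, and its channel entropy is S(D) = log d_B. -/

import Mathlib

open Matrix BigOperators MeasureTheory
open scoped Kronecker ComplexOrder

noncomputable section

namespace ThermalChannel

/-- Square complex matrices of size `d`. -/
abbrev Mat (d : ℕ) := Matrix (Fin d) (Fin d) ℂ

/-- A density matrix: positive semidefinite with unit trace. -/
def IsDensity {ι : Type*} [Fintype ι] (ρ : Matrix ι ι ℂ) : Prop :=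
  ρ.PosSemidef ∧ ρ.trace = 1

/-- The map `L ⊗ id_R` applied to a matrix on `A × R`. -/
def extendId {A B R : Type*} [Fintype A] [Fintype B] [Fintype R]
    (L : Matrix A A ℂ →ₗ[ℂ] Matrix B B ℂ)
    (M : Matrix (A × R) (A × R) ℂ) : Matrix (B × R) (B × R) ℂ :=
  Matrix.of fun p q => L (Matrix.of fun x y => M (x, p.2) (y, q.2)) p.1 q.1

/-- A quantum channel: a completely positive trace-preserving linear map. -/
def IsChannel {A B : Type*} [Fintype A] [Fintype B]
    (L : Matrix A A ℂ →ₗ[ℂ] Matrix B B ℂ) : Prop :=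
  (∀ (k : ℕ) (M : Matrix (A × Fin k) (A × Fin k) ℂ), M.PosSemidef →
    (extendId L M).PosSemidef) ∧
  (∀ M, (L M).trace = M.trace)

/-- The (unnormalized) maximally entangled projector `|Φ⟩⟨Φ|`,
`|Φ⟩ = ∑ j |j⟩|j⟩`. -/
def PhiMat (A : Type*) [DecidableEq A] : Matrix (A × A) (A × A) ℂ :=
  Matrix.of fun p q => if p.1 = p.2 ∧ q.1 = q.2 then 1 else 0

/-- The Choi matrix `J(L) = (L ⊗ id)(Φ)`. -/
def choi {A B : Type*} [Fintype A] [DecidableEq A] [Fintype B]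
    (L : Matrix A A ℂ →ₗ[ℂ] Matrix B B ℂ) : Matrix (B × A) (B × A) ℂ :=
  extendId L (PhiMat A)

/-- Partial trace over the first tensor factor. -/
def ptraceFst {B R : Type*} [Fintype B] (M : Matrix (B × R) (B × R) ℂ) :
    Matrix R R ℂ :=
  Matrix.of fun x y => ∑ b, M (b, x) (b, y)

/-- Partial trace over the second tensor factor. -/
def ptraceSnd {B R : Type*} [Fintype R] (M : Matrix (B × R) (B × R) ℂ) :
    Matrix B B ℂ :=
  Matrix.of fun x y => ∑ r, M (x, r) (y, r)

open Classical in
/-- Functional calculus for Hermitian matrices (junk value `0` for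
non-Hermitian matrices): apply `f` to the eigenvalues. -/
def mfun {ι : Type*} [Fintype ι] [DecidableEq ι] (f : ℝ → ℝ) (M : Matrix ι ι ℂ) :
    Matrix ι ι ℂ :=
  if h : M.IsHermitian then
    (h.eigenvectorUnitary : Matrix ι ι ℂ) *
      Matrix.diagonal (fun i => (f (h.eigenvalues i) : ℂ)) *
      star (h.eigenvectorUnitary : Matrix ι ι ℂ)
  else 0

/-- Matrix square root (of a positive semidefinite matrix). -/
def msqrt {ι : Type*} [Fintype ι] [DecidableEq ι] (M : Matrix ι ι ℂ) : Matrix ι ι ℂ :=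
  mfun Real.sqrt M

open Classical in
/-- Moore–Penrose pseudo-inverse square root of a positive semidefinite matrix. -/
def minvsqrt {ι : Type*} [Fintype ι] [DecidableEq ι] (M : Matrix ι ι ℂ) : Matrix ι ι ℂ :=
  mfun (fun x => if x = 0 then 0 else (Real.sqrt x)⁻¹) M

open Classical in
/-- Orthogonal projector onto the support. -/
def suppProj {ι : Type*} [Fintype ι] [DecidableEq ι] (M : Matrix ι ι ℂ) : Matrix ι ι ℂ :=
  mfun (fun x => if x = 0 then 0 else 1) M

/-- Matrix logarithm, taken spectrally on the support (`log 0 := 0`). -/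
def mlog {ι : Type*} [Fintype ι] [DecidableEq ι] (M : Matrix ι ι ℂ) : Matrix ι ι ℂ :=
  mfun Real.log M

/-- `M log M`, defined spectrally with `0 log 0 := 0`. -/
def xlogx {ι : Type*} [Fintype ι] [DecidableEq ι] (M : Matrix ι ι ℂ) : Matrix ι ι ℂ :=
  mfun (fun x => x * Real.log x) M

/-- Matrix exponential (of a Hermitian matrix). -/
def mexp {ι : Type*} [Fintype ι] [DecidableEq ι] (M : Matrix ι ι ℂ) : Matrix ι ι ℂ :=
  mfun Real.exp M

open Classical in
/-- Von Neumann entropy `S(ρ) = -∑ λᵢ log λᵢ` (junk value `0` for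
non-Hermitian matrices); `0 log 0 := 0` since `Real.log 0 = 0`. -/
def vnEntropy {ι : Type*} [Fintype ι] [DecidableEq ι] (M : Matrix ι ι ℂ) : ℝ :=
  if h : M.IsHermitian then -∑ i, h.eigenvalues i * Real.log (h.eigenvalues i) else 0

/-- Conditional entropy `S(B|R)_τ = S(τ) - S(tr_B τ)`. -/
def condEntropy {B R : Type*} [Fintype B] [Fintype R] [DecidableEq B] [DecidableEq R]
    (τ : Matrix (B × R) (B × R) ℂ) : ℝ :=
  vnEntropy τ - vnEntropy (ptraceFst τ)

/-- The channel entropy `S(N) = min_{ρ_{AR}} S(B|R)_{(N ⊗ id)(ρ_{AR})}`. -/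
def channelEntropy {A B : Type*} [Fintype A] [Fintype B] [DecidableEq A] [DecidableEq B]
    (L : Matrix A A ℂ →ₗ[ℂ] Matrix B B ℂ) : ℝ :=
  sInf {x | ∃ ρ : Matrix (A × A) (A × A) ℂ, IsDensity ρ ∧ x = condEntropy (extendId L ρ)}

/-- The pure state `|φ⟩⟨φ|` with `|φ⟩ = φ_R^{1/2} |Φ_{A:R}⟩`, the square root
acting on the reference factor `R`. -/
def stateAR {A : Type*} [Fintype A] [DecidableEq A] (φR : Matrix A A ℂ) :
    Matrix (A × A) (A × A) ℂ :=
  ((1 : Matrix A A ℂ) ⊗ₖ msqrt φR) * PhiMat A * ((1 : Matrix A A ℂ) ⊗ₖ msqrt φR)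

/-- A channel is feasible if it reproduces the prescribed expectation values
`tr[C^j J(N)] = q_j`. -/
def Feasible {dA dB J : ℕ} (C : Fin J → Matrix (Fin dB × Fin dA) (Fin dB × Fin dA) ℂ)
    (q : Fin J → ℝ) (L : Mat dA →ₗ[ℂ] Mat dB) : Prop :=
  IsChannel L ∧ ∀ j, (C j * choi L).trace = (q j : ℂ)

/-- A thermal quantum channel: an optimizer of the maximum channel entropy
problem. -/
def IsThermalChannel {dA dB J : ℕ}
    (C : Fin J → Matrix (Fin dB × Fin dA) (Fin dB × Fin dA) ℂ) (q : Fin J → ℝ)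
    (T : Mat dA →ₗ[ℂ] Mat dB) : Prop :=
  Feasible C q T ∧ ∀ L, Feasible C q L → channelEntropy L ≤ channelEntropy T


/-- The completely depolarizing channel `D(X) = tr(X) · 1/d_B`. -/
def depol (dA dB : ℕ) : Mat dA →ₗ[ℂ] Mat dB :=
  LinearMap.smulRight (Matrix.traceLinearMap (Fin dA) ℂ ℂ)
    ((dB : ℂ)⁻¹ • (1 : Mat dB))

/-!
Whatever the input, `(D ⊗ id)(ρ) = 1/d_B ⊗ ρ_R`, so every conditional entropy of `D` equals
`log d_B`. For an arbitrary channel `N`, the output `τ` on the maximally entangled input has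
`τ_R = 1/d_A`, hence `S(B|R)_τ ≤ log (d_B d_A) - log d_A = log d_B`, with equality only when `τ` is
maximally mixed. Since `τ` is the normalised Choi matrix of `N`, equality forces `N = D`.
-/

open Real

section Spectral
variable {ι : Type*} [Fintype ι] [DecidableEq ι]

lemma vnEntropy_eq_sum_negMulLog {M : Matrix ι ι ℂ} (hM : M.IsHermitian) :
    vnEntropy M = ∑ i, negMulLog (hM.eigenvalues i) := by
  simp [vnEntropy, hM, negMulLog, Finset.sum_neg_distrib]

lemma vnEntropy_eq_sum_roots_charpoly {M : Matrix ι ι ℂ} (hM : M.IsHermitian) :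
    vnEntropy M = (M.charpoly.roots.map fun z => negMulLog z.re).sum := by
  simp [vnEntropy_eq_sum_negMulLog hM, hM.roots_charpoly_eq_eigenvalues, Multiset.map_map]

lemma vnEntropy_unitary_conj_diagonal (U : unitaryGroup ι ℂ) (d : ι → ℝ) :
    vnEntropy ((U : Matrix ι ι ℂ) * diagonal (fun i => (d i : ℂ)) * star (U : Matrix ι ι ℂ)) =
      ∑ i, negMulLog (d i) := by
  have hD : (diagonal fun i => (d i : ℂ)).IsHermitian := by
    simp [IsHermitian, diagonal_conjTranspose, Pi.star_def]
  have hM := isHermitian_mul_mul_conjTranspose (U : Matrix ι ι ℂ) hD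
  rw [← star_eq_conjTranspose] at hM
  rw [vnEntropy_eq_sum_roots_charpoly hM, charpoly_mul_comm, ← mul_assoc,
    UnitaryGroup.star_mul_self, one_mul, charpoly_diagonal, Polynomial.roots_prod _ _
      (Finset.prod_ne_zero_iff.mpr fun i _ => Polynomial.X_sub_C_ne_zero _)]
  simp [Multiset.map_map]

end Spectral

section Shannon
variable {ι : Type*} [Fintype ι] {p : ι → ℝ}

lemma nonempty_of_sum_eq_one (h1 : ∑ i, p i = 1) : Nonempty ι := by
  by_contra h
  simp [not_nonempty_iff.mp h] at h1

lemma negMulLog_sum_inv_card_smul (h1 : ∑ i, p i = 1) :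
    negMulLog (∑ i, (Fintype.card ι : ℝ)⁻¹ • p i) =
      (Fintype.card ι : ℝ)⁻¹ * log (Fintype.card ι) := by
  simp [← Finset.mul_sum, h1, negMulLog, log_inv]

lemma sum_negMulLog_le_log_card (h0 : ∀ i, 0 ≤ p i) (h1 : ∑ i, p i = 1) :
    ∑ i, negMulLog (p i) ≤ log (Fintype.card ι) := by
  have := nonempty_of_sum_eq_one h1
  have hn : (0 : ℝ) < Fintype.card ι := by exact_mod_cast Fintype.card_pos
  have key := concaveOn_negMulLog.le_map_sum (t := Finset.univ)
    (w := fun _ => (Fintype.card ι : ℝ)⁻¹) (fun _ _ => by positivity)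
    (by simp [hn.ne']) (fun i _ => h0 i) (p := p)
  rw [negMulLog_sum_inv_card_smul h1] at key
  simp only [smul_eq_mul, ← Finset.mul_sum] at key
  exact le_of_mul_le_mul_left key (by positivity)

lemma eq_inv_card_of_sum_negMulLog_eq_log_card (h0 : ∀ i, 0 ≤ p i) (h1 : ∑ i, p i = 1)
    (h : ∑ i, negMulLog (p i) = log (Fintype.card ι)) (i : ι) : p i = (Fintype.card ι : ℝ)⁻¹ := by
  have hn : (0 : ℝ) < Fintype.card ι := Nat.cast_pos.mpr (Fintype.card_pos_iff.mpr ⟨i⟩)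
  have hconst := (strictConcaveOn_negMulLog.map_sum_eq_iff_of_pos (t := Finset.univ)
    (w := fun _ => (Fintype.card ι : ℝ)⁻¹) (fun _ _ => by positivity)
    (by simp [hn.ne']) (fun i _ => h0 i) (p := p)).mp
    (by rw [negMulLog_sum_inv_card_smul h1]; simp only [smul_eq_mul, ← Finset.mul_sum, h])
  have hsum : ∑ j, p j = Fintype.card ι * p i := by
    simp [fun j => hconst (Finset.mem_univ j) (Finset.mem_univ i)]
  rw [h1] at hsum
  exact eq_inv_of_mul_eq_one_right hsum.symm

end Shannon

def maxMixed (ι : Type*) [Fintype ι] [DecidableEq ι] : Matrix ι ι ℂ :=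
  (Fintype.card ι : ℂ)⁻¹ • 1

section Density
variable {ι : Type*} [Fintype ι] [DecidableEq ι] {M : Matrix ι ι ℂ}

lemma vnEntropy_maxMixed : vnEntropy (maxMixed ι) = log (Fintype.card ι) := by
  have h := vnEntropy_unitary_conj_diagonal 1 fun _ : ι => (Fintype.card ι : ℝ)⁻¹
  simp only [OneMemClass.coe_one, star_one, one_mul, mul_one, Finset.sum_const,
    Finset.card_univ, nsmul_eq_mul, Complex.ofReal_inv, Complex.ofReal_natCast] at h
  rw [maxMixed, smul_one_eq_diagonal, h, negMulLog, log_inv]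
  rcases eq_or_ne (Fintype.card ι : ℝ) 0 with hn | hn
  · simp [hn]
  · field_simp

lemma IsDensity.sum_eigenvalues (hM : IsDensity M) : ∑ i, hM.1.1.eigenvalues i = 1 := by
  have h := congrArg Complex.re hM.2
  rw [hM.1.1.trace_eq_sum_eigenvalues] at h
  simpa using h

lemma IsDensity.vnEntropy_nonneg (hM : IsDensity M) : 0 ≤ vnEntropy M := by
  rw [vnEntropy_eq_sum_negMulLog hM.1.1]
  refine Finset.sum_nonneg fun i _ => negMulLog_nonneg (hM.1.eigenvalues_nonneg i) ?_
  rw [← hM.sum_eigenvalues]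
  exact Finset.single_le_sum (fun j _ => hM.1.eigenvalues_nonneg j) (Finset.mem_univ i)

lemma IsDensity.vnEntropy_le_log_card (hM : IsDensity M) :
    vnEntropy M ≤ log (Fintype.card ι) := by
  rw [vnEntropy_eq_sum_negMulLog hM.1.1]
  exact sum_negMulLog_le_log_card hM.1.eigenvalues_nonneg hM.sum_eigenvalues

lemma IsDensity.eq_maxMixed_of_vnEntropy_eq (hM : IsDensity M)
    (h : vnEntropy M = log (Fintype.card ι)) : M = maxMixed ι := by
  rw [vnEntropy_eq_sum_negMulLog hM.1.1] at h
  have hev := eq_inv_card_of_sum_negMulLog_eq_log_card hM.1.eigenvalues_nonneg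
    hM.sum_eigenvalues h
  have hdiag : RCLike.ofReal ∘ hM.1.1.eigenvalues = fun _ => (Fintype.card ι : ℂ)⁻¹ := by
    ext i
    simp [hev i]
  conv_lhs => rw [hM.1.1.spectral_theorem, hdiag, ← smul_one_eq_diagonal, map_smul, map_one]
  rfl

end Density

section Kronecker
variable {m n : Type*} [Fintype m] [Fintype n] [DecidableEq m] [DecidableEq n]

lemma maxMixed_kronecker_unitary_conj (U : unitaryGroup n ℂ) (d : n → ℝ) :
    maxMixed m ⊗ₖ ((U : Matrix n n ℂ) * diagonal (fun i => (d i : ℂ)) * star (U : Matrix n n ℂ)) =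
      ((1 : Matrix m m ℂ) ⊗ₖ (U : Matrix n n ℂ)) *
        diagonal (fun p : m × n => (((Fintype.card m : ℝ)⁻¹ * d p.2 : ℝ) : ℂ)) *
        star ((1 : Matrix m m ℂ) ⊗ₖ (U : Matrix n n ℂ)) := by
  have hdiag : maxMixed m = 1 * diagonal (fun _ => ((Fintype.card m : ℝ)⁻¹ : ℂ)) * 1 := by
    simp [maxMixed, smul_one_eq_diagonal]
  rw [hdiag, mul_kronecker_mul, mul_kronecker_mul, diagonal_kronecker_diagonal,
    star_eq_conjTranspose, star_eq_conjTranspose, conjTranspose_kronecker, conjTranspose_one]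
  push_cast
  rfl

lemma vnEntropy_maxMixed_kronecker [Nonempty m] {σ : Matrix n n ℂ} (hσ : IsDensity σ) :
    vnEntropy (maxMixed m ⊗ₖ σ) = log (Fintype.card m) + vnEntropy σ := by
  have hn : (Fintype.card m : ℝ) ≠ 0 := Nat.cast_ne_zero.mpr Fintype.card_ne_zero
  set ev := hσ.1.1.eigenvalues
  have hσU : σ = (hσ.1.1.eigenvectorUnitary : Matrix n n ℂ) *
      diagonal (fun i => (ev i : ℂ)) * star (hσ.1.1.eigenvectorUnitary : Matrix n n ℂ) :=
    hσ.1.1.spectral_theorem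
  have hinner : ∑ j, negMulLog ((Fintype.card m : ℝ)⁻¹ * ev j) =
      (Fintype.card m : ℝ)⁻¹ * log (Fintype.card m) +
        (Fintype.card m : ℝ)⁻¹ * ∑ j, negMulLog (ev j) := by
    simp only [negMulLog_mul]
    rw [Finset.sum_add_distrib, ← Finset.sum_mul, ← Finset.mul_sum, hσ.sum_eigenvalues, one_mul,
      negMulLog, log_inv]
    ring
  rw [hσU, maxMixed_kronecker_unitary_conj]
  refine (vnEntropy_unitary_conj_diagonal
    ⟨_, kronecker_mem_unitary (one_mem _) hσ.1.1.eigenvectorUnitary.2⟩ _).trans ?_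
  rw [← hσU, vnEntropy_eq_sum_negMulLog hσ.1.1, Fintype.sum_prod_type]
  simp only [hinner, Finset.sum_const, Finset.card_univ, nsmul_eq_mul]
  rw [mul_add, ← mul_assoc, ← mul_assoc, mul_inv_cancel₀ hn, one_mul, one_mul]

end Kronecker

section PartialTrace
variable {B R : Type*} [Fintype B]

lemma trace_ptraceFst [Fintype R] (M : Matrix (B × R) (B × R) ℂ) :
    (ptraceFst M).trace = M.trace := by
  rw [trace, trace, Fintype.sum_prod_type, Finset.sum_comm]
  rfl

lemma posSemidef_ptraceFst [Fintype R] {M : Matrix (B × R) (B × R) ℂ} (hM : M.PosSemidef) :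
    (ptraceFst M).PosSemidef := by
  have h : ptraceFst M = ∑ b, M.submatrix (fun r => (b, r)) (fun r => (b, r)) := by
    ext r r'
    simp [ptraceFst, Matrix.sum_apply]
  rw [h]
  exact posSemidef_sum _ fun b _ => hM.submatrix _

lemma isDensity_ptraceFst [Fintype R] {M : Matrix (B × R) (B × R) ℂ} (hM : IsDensity M) :
    IsDensity (ptraceFst M) :=
  ⟨posSemidef_ptraceFst hM.1, (trace_ptraceFst M).trans hM.2⟩

lemma ptraceFst_smul (c : ℂ) (M : Matrix (B × R) (B × R) ℂ) :
    ptraceFst (c • M) = c • ptraceFst M := by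
  ext r r'
  simp [ptraceFst, Finset.mul_sum]

lemma ptraceFst_kronecker (X : Matrix B B ℂ) (Y : Matrix R R ℂ) :
    ptraceFst (X ⊗ₖ Y) = X.trace • Y := by
  ext r r'
  simp [ptraceFst, trace, Finset.sum_mul]

end PartialTrace

section MaxMixed
variable {ι : Type*} [Fintype ι] [DecidableEq ι]

lemma trace_maxMixed [Nonempty ι] : (maxMixed ι).trace = 1 := by
  simp [maxMixed, trace_smul, trace_one]

lemma posSemidef_maxMixed : (maxMixed ι).PosSemidef :=
  PosSemidef.one.smul (inv_nonneg.mpr (Nat.cast_nonneg _))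

lemma maxMixed_kronecker_maxMixed {κ : Type*} [Fintype κ] [DecidableEq κ] :
    maxMixed ι ⊗ₖ maxMixed κ = maxMixed (ι × κ) := by
  simp [maxMixed, smul_kronecker, kronecker_smul, smul_smul, mul_comm]

lemma IsDensity.nonempty {M : Matrix ι ι ℂ} (hM : IsDensity M) : Nonempty ι :=
  nonempty_of_sum_eq_one hM.sum_eigenvalues

end MaxMixed

section ExtendId
variable {A B R : Type*} [Fintype A] [Fintype B] [Fintype R]

lemma ptraceFst_extendId {L : Matrix A A ℂ →ₗ[ℂ] Matrix B B ℂ}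
    (hL : ∀ X, (L X).trace = X.trace) (M : Matrix (A × R) (A × R) ℂ) :
    ptraceFst (extendId L M) = ptraceFst M := by
  ext r r'
  simpa [trace, extendId, ptraceFst] using hL (of fun x y => M (x, r) (y, r'))

lemma trace_extendId {L : Matrix A A ℂ →ₗ[ℂ] Matrix B B ℂ} (hL : ∀ X, (L X).trace = X.trace)
    (M : Matrix (A × R) (A × R) ℂ) : (extendId L M).trace = M.trace := by
  rw [← trace_ptraceFst, ptraceFst_extendId hL, trace_ptraceFst]

lemma extendId_smul (L : Matrix A A ℂ →ₗ[ℂ] Matrix B B ℂ) (c : ℂ)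
    (M : Matrix (A × R) (A × R) ℂ) : extendId L (c • M) = c • extendId L M := by
  ext p q
  have h : (of fun x y => (c • M) (x, p.2) (y, q.2)) = c • of fun x y => M (x, p.2) (y, q.2) := by
    ext
    simp
  simp only [extendId, of_apply, h, map_smul]
  rfl

lemma IsChannel.isDensity_extendId {L : Matrix A A ℂ →ₗ[ℂ] Matrix B B ℂ} (hL : IsChannel L)
    {k : ℕ} {ρ : Matrix (A × Fin k) (A × Fin k) ℂ} (hρ : IsDensity ρ) :
    IsDensity (extendId L ρ) :=
  ⟨hL.1 k ρ hρ.1, (trace_extendId hL.2 ρ).trans hρ.2⟩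

end ExtendId

def maxEntangled (A : Type*) [Fintype A] [DecidableEq A] : Matrix (A × A) (A × A) ℂ :=
  (Fintype.card A : ℂ)⁻¹ • PhiMat A

lemma PhiMat_eq_vecMulVec {A : Type*} [DecidableEq A] :
    PhiMat A = vecMulVec (fun p : A × A => if p.1 = p.2 then 1 else 0)
      (star fun p : A × A => if p.1 = p.2 then 1 else 0) := by
  ext p q
  by_cases hp : p.1 = p.2 <;> by_cases hq : q.1 = q.2 <;> simp [PhiMat, vecMulVec_apply, hp, hq]

section MaxEntangled
variable {A B : Type*} [Fintype A] [DecidableEq A] [Fintype B]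

lemma posSemidef_PhiMat : (PhiMat A).PosSemidef := by
  rw [PhiMat_eq_vecMulVec]
  exact posSemidef_vecMulVec_self_star _

lemma ptraceFst_PhiMat : ptraceFst (PhiMat A) = 1 := by
  ext r r'
  simp [ptraceFst, PhiMat, one_apply, ite_and]

lemma ptraceFst_maxEntangled : ptraceFst (maxEntangled A) = maxMixed A := by
  rw [maxEntangled, ptraceFst_smul, ptraceFst_PhiMat, maxMixed]

lemma isDensity_maxEntangled [Nonempty A] : IsDensity (maxEntangled A) :=
  ⟨posSemidef_PhiMat.smul (inv_nonneg.mpr (Nat.cast_nonneg _)),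
    by rw [← trace_ptraceFst, ptraceFst_maxEntangled, trace_maxMixed]⟩

lemma choi_apply (L : Matrix A A ℂ →ₗ[ℂ] Matrix B B ℂ) (b b' : B) (a a' : A) :
    choi L (b, a) (b', a') = L (single a a' 1) b b' := by
  have h : (of fun x y => PhiMat A (x, a) (y, a')) = single a a' 1 := by
    ext x y
    simp [PhiMat, single_apply, eq_comm]
  exact congrFun (congrFun (congrArg L h) b) b'

lemma choi_injective : Function.Injective (choi : (Matrix A A ℂ →ₗ[ℂ] Matrix B B ℂ) → _) := by
  intro L₁ L₂ h
  refine ext_linearMap ℂ fun a a' => LinearMap.ext_ring ?_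
  ext b b'
  simpa [choi_apply] using congrFun (congrFun h (b, a)) (b', a')

lemma eq_of_extendId_maxEntangled_eq {L₁ L₂ : Matrix A A ℂ →ₗ[ℂ] Matrix B B ℂ} [Nonempty A]
    (h : extendId L₁ (maxEntangled A) = extendId L₂ (maxEntangled A)) : L₁ = L₂ := by
  refine choi_injective ?_
  rw [maxEntangled, extendId_smul, extendId_smul] at h
  exact smul_right_injective _ (inv_ne_zero (Nat.cast_ne_zero.mpr Fintype.card_ne_zero)) h

end MaxEntangled

section CondEntropy
variable {B R : Type*} [Fintype B] [Fintype R] [DecidableEq B] [DecidableEq R]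
  {τ : Matrix (B × R) (B × R) ℂ}

lemma IsDensity.neg_log_card_le_condEntropy (hτ : IsDensity τ) :
    -log (Fintype.card R) ≤ condEntropy τ := by
  have h₁ := hτ.vnEntropy_nonneg
  have h₂ := (isDensity_ptraceFst hτ).vnEntropy_le_log_card
  rw [condEntropy]
  linarith

lemma IsDensity.log_card_prod (hτ : IsDensity τ) :
    log (Fintype.card (B × R)) = log (Fintype.card B) + log (Fintype.card R) := by
  obtain ⟨b, r⟩ := Classical.choice hτ.nonempty
  have hB : 0 < Fintype.card B := Fintype.card_pos_iff.mpr ⟨b⟩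
  have hR : 0 < Fintype.card R := Fintype.card_pos_iff.mpr ⟨r⟩
  rw [Fintype.card_prod, Nat.cast_mul, log_mul (by positivity) (by positivity)]

lemma IsDensity.condEntropy_le_log_card (hτ : IsDensity τ) (hR : ptraceFst τ = maxMixed R) :
    condEntropy τ ≤ log (Fintype.card B) := by
  have h := hτ.vnEntropy_le_log_card
  rw [hτ.log_card_prod] at h
  rw [condEntropy, hR, vnEntropy_maxMixed]
  linarith

lemma IsDensity.eq_maxMixed_of_condEntropy_eq (hτ : IsDensity τ) (hR : ptraceFst τ = maxMixed R)
    (h : condEntropy τ = log (Fintype.card B)) : τ = maxMixed (B × R) := by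
  refine hτ.eq_maxMixed_of_vnEntropy_eq ?_
  rw [condEntropy, hR, vnEntropy_maxMixed] at h
  rw [hτ.log_card_prod]
  linarith

end CondEntropy

lemma IsChannel.channelEntropy_le {dA : ℕ} {B : Type*} [Fintype B] [DecidableEq B]
    {L : Mat dA →ₗ[ℂ] Matrix B B ℂ} (hL : IsChannel L)
    {ρ : Matrix (Fin dA × Fin dA) (Fin dA × Fin dA) ℂ} (hρ : IsDensity ρ) :
    channelEntropy L ≤ condEntropy (extendId L ρ) := by
  refine csInf_le ⟨-log dA, ?_⟩ ⟨ρ, hρ, rfl⟩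
  rintro _ ⟨σ, hσ, rfl⟩
  simpa using (hL.isDensity_extendId hσ).neg_log_card_le_condEntropy

section Depolarizing
variable {dA dB : ℕ}

lemma depol_apply (X : Mat dA) : depol dA dB X = X.trace • maxMixed (Fin dB) := by
  simp [depol, maxMixed]

lemma extendId_depol {R : Type*} [Fintype R] (M : Matrix (Fin dA × R) (Fin dA × R) ℂ) :
    extendId (depol dA dB) M = maxMixed (Fin dB) ⊗ₖ ptraceFst M := by
  ext p q
  simp [extendId, depol_apply, ptraceFst, trace, mul_comm]

lemma isChannel_depol (hdB : 0 < dB) : IsChannel (depol dA dB) := by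
  have : Nonempty (Fin dB) := Fin.pos_iff_nonempty.mp hdB
  refine ⟨fun k M hM => ?_, fun X => ?_⟩
  · rw [extendId_depol]
    exact posSemidef_maxMixed.kronecker (posSemidef_ptraceFst hM)
  · rw [depol_apply, trace_smul, trace_maxMixed, smul_eq_mul, mul_one]

lemma condEntropy_extendId_depol (hdB : 0 < dB) {ρ : Matrix (Fin dA × Fin dA) (Fin dA × Fin dA) ℂ}
    (hρ : IsDensity ρ) : condEntropy (extendId (depol dA dB) ρ) = log dB := by
  have : Nonempty (Fin dB) := Fin.pos_iff_nonempty.mp hdB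
  rw [condEntropy, extendId_depol, vnEntropy_maxMixed_kronecker (isDensity_ptraceFst hρ),
    ptraceFst_kronecker, trace_maxMixed, one_smul, Fintype.card_fin, add_sub_cancel_right]

lemma channelEntropy_depol (hdA : 0 < dA) (hdB : 0 < dB) :
    channelEntropy (depol dA dB) = log dB := by
  have : Nonempty (Fin dA) := Fin.pos_iff_nonempty.mp hdA
  have hset : {x | ∃ ρ : Matrix (Fin dA × Fin dA) (Fin dA × Fin dA) ℂ,
      IsDensity ρ ∧ x = condEntropy (extendId (depol dA dB) ρ)} = {log dB} := by
    refine Set.eq_singleton_iff_unique_mem.mpr ⟨⟨_, isDensity_maxEntangled, ?_⟩, ?_⟩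
    · exact (condEntropy_extendId_depol hdB isDensity_maxEntangled).symm
    · rintro _ ⟨ρ, hρ, rfl⟩
      exact condEntropy_extendId_depol hdB hρ
  rw [channelEntropy, hset, csInf_singleton]

lemma extendId_depol_maxEntangled :
    extendId (depol dA dB) (maxEntangled (Fin dA)) = maxMixed (Fin dB × Fin dA) := by
  rw [extendId_depol, ptraceFst_maxEntangled, maxMixed_kronecker_maxMixed]

end Depolarizing

/-- **The unconstrained thermal channel is the completely depolarizing
channel.**  `D(X) = tr(X)·1/d_B` is the unique maximizer of the channel
entropy among all channels, with `S(D) = log d_B`. -/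
theorem unconstrained_thermal_channel_is_depolarizing
    {dA dB : ℕ} (hdA : 0 < dA) (hdB : 0 < dB) :
    IsChannel (depol dA dB) ∧
    channelEntropy (depol dA dB) = Real.log dB ∧
    ∀ N : Mat dA →ₗ[ℂ] Mat dB, IsChannel N →
      channelEntropy N ≤ Real.log dB ∧
      (channelEntropy N = Real.log dB → N = depol dA dB) := by
  have : Nonempty (Fin dA) := Fin.pos_iff_nonempty.mp hdA
  refine ⟨isChannel_depol hdB, channelEntropy_depol hdA hdB, fun N hN => ?_⟩
  set τ := extendId N (maxEntangled (Fin dA))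
  have hτ : IsDensity τ := hN.isDensity_extendId isDensity_maxEntangled
  have hτR : ptraceFst τ = maxMixed (Fin dA) := by
    rw [ptraceFst_extendId hN.2, ptraceFst_maxEntangled]
  have hle : channelEntropy N ≤ condEntropy τ := hN.channelEntropy_le isDensity_maxEntangled
  have hlog : condEntropy τ ≤ log dB := by
    simpa using hτ.condEntropy_le_log_card hτR
  refine ⟨hle.trans hlog, fun hmax => eq_of_extendId_maxEntangled_eq ?_⟩
  rw [extendId_depol_maxEntangled]
  refine hτ.eq_maxMixed_of_condEntropy_eq hτR ?_
  rw [Fintype.card_fin]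
  exact le_antisymm hlog (hmax ▸ hle)

end ThermalChannel
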